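/- Unbiasedness of the per-decision hindsight policy gradient estimator: given N i.i.d. pairs (τ^(i), g^(i)) with g^(i) ~ p(g) and τ^(i) ~ p(τ | g^(i), θ), the estimator (1/N) Σ_i Σ_g p(g) Σ_{t=1}^{T−1} ∇ log p(a_t^(i) | s_t^(i), g, θ) Σ_{t'=t+1}^T [ ∏_{k=1}^{t'−1} p(a_k^(i) | s_k^(i), g, θ)/p(a_k^(i) | s_k^(i), g^(i), θ) ] r(s_{t'}^(i), g) has expectation equal to ∇η(θ). -/

import Mathlib

open Finset

/-- A trajectory `s_1, a_1, …, s_T` with horizon `T = n + 1`. -/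
abbrev Traj (S A : Type) (n : ℕ) := (Fin (n + 1) → S) × (Fin n → A)

/-- `p(τ ∣ g, θ) = p(s_1) ∏_{t=1}^{T-1} p(a_t ∣ s_t, g, θ) p(s_{t+1} ∣ s_t, a_t)`. -/
def trajProb {S A G : Type} (n : ℕ) (init : S → ℝ) (trans : S → A → S → ℝ)
    (pol : ℝ → G → S → A → ℝ) (θ : ℝ) (g : G) (τ : Traj S A n) : ℝ :=
  init (τ.1 0) * ∏ t : Fin n,
    pol θ g (τ.1 t.castSucc) (τ.2 t) * trans (τ.1 t.castSucc) (τ.2 t) (τ.1 t.succ)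

/-- The expected return `η(θ) = ∑_g p(g) ∑_τ p(τ ∣ g, θ) ∑_{t=1}^T r(s_t, g)`. -/
def expReturn {S A G : Type} [Fintype S] [Fintype A] [Fintype G] (n : ℕ)
    (init : S → ℝ) (trans : S → A → S → ℝ) (pol : ℝ → G → S → A → ℝ)
    (pG : G → ℝ) (r : S → G → ℝ) (θ : ℝ) : ℝ :=
  ∑ g : G, pG g * ∑ τ : Traj S A n,
    trajProb n init trans pol θ g τ * ∑ t : Fin (n + 1), r (τ.1 t) g

/-!
Averaging over the i.i.d. sample reduces the claim to a single pair `(τ, g')`, i.e. to the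
per-decision hindsight policy gradient theorem for each fixed `g'`. There, the importance weight
`∏_{k < t'} π(a_k ∣ s_k, g) / π(a_k ∣ s_k, g')` turns the prefix of `p(τ ∣ g', θ)` that the reward
`r(s_{t'}, g)` sees into that of `p(τ ∣ g, θ)`, while the later steps sum out to `1`. So each
term is `E_{τ ∼ p(· ∣ g, θ)} [∇ log π(a_t ∣ s_t, g, θ) r(s_{t'}, g)]`. The likelihood-ratio trick
writes `∇η(θ)` as the sum of these terms over all pairs `(t, t')`, and the terms with `t' ≤ t`
vanish because `∑_a ∇π(a ∣ s, g, θ) = 0`.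
-/

section PathWeight

variable {S A : Type}

def pathWeight {n : ℕ} (W : S → ℝ) (c : Fin n → S → A → S → ℝ) (τ : Traj S A n) : ℝ :=
  W (τ.1 0) * ∏ t : Fin n, c t (τ.1 t.castSucc) (τ.2 t) (τ.1 t.succ)

theorem pathWeight_snoc {n : ℕ} (W : S → ℝ) (c : Fin (n + 1) → S → A → S → ℝ)
    (τ : Traj S A n) (a : A) (s : S) :
    pathWeight W c (Fin.snoc τ.1 s, Fin.snoc τ.2 a) =
      pathWeight W (fun k => c k.castSucc) τ * c (Fin.last n) (τ.1 (Fin.last n)) a s := by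
  simp [pathWeight, Fin.prod_univ_castSucc, mul_assoc, Fin.succ_castSucc, -Fin.castSucc_succ]

theorem pathWeight_update {n : ℕ} (W : S → ℝ) (c : Fin n → S → A → S → ℝ) (t : Fin n)
    (d : S → A → S → ℝ) (τ : Traj S A n) :
    pathWeight W (Function.update c t d) τ = W (τ.1 0) *
      ((∏ k ∈ univ.erase t, c k (τ.1 k.castSucc) (τ.2 k) (τ.1 k.succ)) *
        d (τ.1 t.castSucc) (τ.2 t) (τ.1 t.succ)) := by
  rw [pathWeight, ← mul_prod_erase univ _ (mem_univ t), Function.update_self, mul_comm (d _ _ _)]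
  congr 2
  refine prod_congr rfl fun k hk => ?_
  rw [Function.update_of_ne (ne_of_mem_erase hk)]

theorem hasDerivAt_pathWeight {n : ℕ} (W : S → ℝ) (c : ℝ → Fin n → S → A → S → ℝ)
    (c' : Fin n → S → A → S → ℝ) (x : ℝ) (τ : Traj S A n)
    (hc : ∀ k, HasDerivAt (fun y => c y k (τ.1 k.castSucc) (τ.2 k) (τ.1 k.succ))
      (c' k (τ.1 k.castSucc) (τ.2 k) (τ.1 k.succ)) x) :
    HasDerivAt (fun y => pathWeight W (c y) τ)
      (∑ t, pathWeight W (Function.update (c x) t (c' t)) τ) x := by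
  simp only [pathWeight_update, ← mul_sum, ← smul_eq_mul (a := ∏ k ∈ univ.erase _, _)]
  exact (HasDerivAt.fun_finsetProd fun k _ => hc k).const_mul _

def trajSnocEquiv (n : ℕ) : Traj S A n × A × S ≃ Traj S A (n + 1) where
  toFun p := (Fin.snoc p.1.1 p.2.2, Fin.snoc p.1.2 p.2.1)
  invFun τ := ((Fin.init τ.1, Fin.init τ.2), τ.2 (Fin.last n), τ.1 (Fin.last (n + 1)))
  left_inv p := by simp
  right_inv τ := by simp

variable [Fintype S] [Fintype A]

theorem sum_traj_succ {n : ℕ} (F : Traj S A (n + 1) → ℝ) :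
    ∑ τ, F τ = ∑ τ : Traj S A n, ∑ a, ∑ s, F (Fin.snoc τ.1 s, Fin.snoc τ.2 a) := by
  rw [← (trajSnocEquiv n).sum_comp, Fintype.sum_prod_type]
  simp only [Fintype.sum_prod_type]
  rfl

theorem sum_pathWeight_mul_apply {m n : ℕ} (h : m ≤ n) (W : S → ℝ)
    (c : Fin n → S → A → S → ℝ) (μ : Fin n → ℝ)
    (hμ : ∀ k : Fin n, m ≤ k → ∀ s, ∑ a, ∑ s', c k s a s' = μ k) (f : S → ℝ) :
    ∑ τ : Traj S A n, pathWeight W c τ * f (τ.1 ⟨m, Nat.lt_succ_of_le h⟩) =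
      (∏ k : Fin n with m ≤ k.val, μ k) *
        ∑ τ : Traj S A m, pathWeight W (fun k => c (Fin.castLE h k)) τ * f (τ.1 (Fin.last m)) := by
  induction n with
  | zero =>
    obtain rfl : m = 0 := Nat.le_zero.mp h
    simp
  | succ n ih =>
    rcases h.eq_or_lt with rfl | hlt
    · simp [not_lt.mpr (Fin.is_le _)]
      rfl
    have hm : m ≤ n := Nat.lt_succ_iff.mp hlt
    have hstate : ∀ (s : Fin (n + 1) → S) (x : S),
        (Fin.snoc s x : Fin (n + 2) → S) ⟨m, Nat.lt_succ_of_le h⟩ = s ⟨m, Nat.lt_succ_of_le hm⟩ :=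
      fun s x => Fin.snoc_castSucc (α := fun _ => S) x s ⟨m, _⟩
    have hprod : ∏ k : Fin (n + 1) with m ≤ k.val, μ k =
        (∏ k : Fin n with m ≤ k.val, μ k.castSucc) * μ (Fin.last n) := by
      simp only [prod_filter, Fin.prod_univ_castSucc, Fin.val_castSucc, Fin.val_last, if_pos hm]
    calc ∑ τ : Traj S A (n + 1), pathWeight W c τ * f (τ.1 ⟨m, Nat.lt_succ_of_le h⟩)
        = ∑ τ : Traj S A n, pathWeight W (fun k => c k.castSucc) τ *
            f (τ.1 ⟨m, Nat.lt_succ_of_le hm⟩) * μ (Fin.last n) := by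
          rw [sum_traj_succ]
          refine sum_congr rfl fun τ _ => ?_
          simp only [pathWeight_snoc, hstate, ← hμ (Fin.last n) hm (τ.1 (Fin.last n)), mul_sum]
          exact sum_congr rfl fun a _ => sum_congr rfl fun s _ => by ring
      _ = _ := by
          rw [← sum_mul, ih hm _ _ fun k hk => hμ k.castSucc hk, hprod]
          rw [mul_right_comm]
          rfl

theorem sum_pathWeight_mul_apply_congr {n : ℕ} (m : Fin (n + 1)) (W : S → ℝ)
    (c c' : Fin n → S → A → S → ℝ) (μ : Fin n → ℝ) (hc : ∀ k : Fin n, k.castSucc < m → c k = c' k)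
    (hμ : ∀ k : Fin n, m ≤ k.castSucc → ∀ s, ∑ a, ∑ s', c k s a s' = μ k)
    (hμ' : ∀ k : Fin n, m ≤ k.castSucc → ∀ s, ∑ a, ∑ s', c' k s a s' = μ k) (f : S → ℝ) :
    ∑ τ : Traj S A n, pathWeight W c τ * f (τ.1 m) =
      ∑ τ : Traj S A n, pathWeight W c' τ * f (τ.1 m) := by
  obtain ⟨m, hm⟩ := m
  have h : m ≤ n := Nat.lt_succ_iff.mp hm
  rw [sum_pathWeight_mul_apply h W c μ (fun k hk => hμ k hk),
    sum_pathWeight_mul_apply h W c' μ (fun k hk => hμ' k hk)]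
  congr 3 with τ
  congr 2
  exact funext fun k => hc (Fin.castLE h k) k.isLt

theorem sum_pathWeight {n : ℕ} (W : S → ℝ) (c : Fin n → S → A → S → ℝ) (μ : Fin n → ℝ)
    (hμ : ∀ k s, ∑ a, ∑ s', c k s a s' = μ k) :
    ∑ τ : Traj S A n, pathWeight W c τ = (∏ k, μ k) * ∑ s, W s := by
  have h := sum_pathWeight_mul_apply (Nat.zero_le n) W c μ (fun k _ => hμ k) fun _ => 1
  simp only [mul_one, Nat.zero_le, filter_true] at h
  rw [h]
  congr 1
  rw [Fintype.sum_prod_type]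
  simp only [pathWeight, univ_eq_empty, prod_empty, mul_one, sum_const, card_univ,
    Fintype.card_unique, one_smul]
  exact (Equiv.funUnique (Fin 1) S).sum_comp W

end PathWeight

theorem sum_prod_mul_apply {ι X : Type*} [Fintype ι] [DecidableEq ι] [Fintype X] (q f : X → ℝ)
    (hq : ∑ x, q x = 1) (i : ι) :
    ∑ D : ι → X, (∏ j, q (D j)) * f (D i) = ∑ x, q x * f x := by
  have hsplit : ∀ D : ι → X,
      (∏ j, q (D j)) * f (D i) = ∏ j, q (D j) * if j = i then f (D j) else 1 := fun D => by
    rw [prod_mul_distrib, prod_ite_eq' univ i, if_pos (mem_univ i)]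
  simp only [hsplit]
  rw [← Fintype.prod_sum fun j x => q x * if j = i then f x else 1]
  rw [← mul_prod_erase univ _ (mem_univ i),
    prod_eq_one fun j hj => by simp [ne_of_mem_erase hj, hq]]
  simp

theorem sum_prod_mul_mean {X : Type*} [Fintype X] (q f : X → ℝ) (hq : ∑ x, q x = 1) {N : ℕ}
    (hN : 0 < N) :
    ∑ D : Fin N → X, (∏ i, q (D i)) * ((N : ℝ)⁻¹ * ∑ i, f (D i)) = ∑ x, q x * f x := by
  simp only [mul_sum, mul_left_comm _ (N : ℝ)⁻¹]
  rw [sum_comm]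
  simp only [← mul_sum, sum_prod_mul_apply q f hq, sum_const, card_univ, Fintype.card_fin,
    nsmul_eq_mul]
  field_simp

theorem sum_deriv_eq_zero_of_sum_eq {ι : Type*} (u : Finset ι) (f : ι → ℝ → ℝ) (c x : ℝ)
    (hf : ∀ i ∈ u, DifferentiableAt ℝ (f i) x) (hsum : ∀ y, ∑ i ∈ u, f i y = c) :
    ∑ i ∈ u, deriv (f i) x = 0 := by
  rw [← deriv_fun_sum hf, funext hsum, deriv_const]

section Hindsight

variable {S A G : Type}

def policyKernel (π : S → A → ℝ) (trans : S → A → S → ℝ) : S → A → S → ℝ :=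
  fun s a s' => π s a * trans s a s'

noncomputable def scoreKernel (n : ℕ) (trans : S → A → S → ℝ) (pol : ℝ → G → S → A → ℝ)
    (θ : ℝ) (g : G) (t : Fin n) : Fin n → S → A → S → ℝ :=
  Function.update (fun _ => policyKernel (pol θ g) trans) t
    (policyKernel (fun s a => deriv (fun θ' => pol θ' g s a) θ) trans)

noncomputable def importanceWeight (n : ℕ) (pol : ℝ → G → S → A → ℝ) (θ : ℝ) (g g' : G)
    (t' : Fin (n + 1)) (τ : Traj S A n) : ℝ :=
  ∏ k : Fin n, if k.castSucc < t' then
    pol θ g (τ.1 k.castSucc) (τ.2 k) / pol θ g' (τ.1 k.castSucc) (τ.2 k) else 1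

/-- `E_{τ ∼ p(· ∣ g, θ)} [∇ log π(a_t ∣ s_t, g, θ) r(s_{t'}, g)]`, with the score multiplied into
the `t`-th step of `p(τ ∣ g, θ)`. -/
noncomputable def scoreReward [Fintype S] [Fintype A] (n : ℕ) (init : S → ℝ) (trans : S → A → S → ℝ)
    (pol : ℝ → G → S → A → ℝ) (r : S → G → ℝ) (θ : ℝ) (g : G) (t : Fin n) (t' : Fin (n + 1)) :
    ℝ :=
  ∑ τ : Traj S A n, pathWeight init (scoreKernel n trans pol θ g t) τ * r (τ.1 t') g

noncomputable def hindsightEstimate [Fintype G] (n : ℕ) (pol : ℝ → G → S → A → ℝ) (pG : G → ℝ)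
    (r : S → G → ℝ) (θ : ℝ) (τ : Traj S A n) (g' : G) : ℝ :=
  ∑ g : G, pG g * ∑ t : Fin n,
    deriv (fun θ'' => Real.log (pol θ'' g (τ.1 t.castSucc) (τ.2 t))) θ *
      ∑ t' ∈ univ.filter (fun t' : Fin (n + 1) => t.castSucc < t'),
        importanceWeight n pol θ g g' t' τ * r (τ.1 t') g

variable {n : ℕ} {init : S → ℝ} {trans : S → A → S → ℝ} {pol : ℝ → G → S → A → ℝ} {θ : ℝ}

theorem trajProb_eq_pathWeight (g : G) :
    trajProb n init trans pol θ g = pathWeight init (fun _ => policyKernel (pol θ g) trans) :=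
  rfl

theorem hasDerivAt_trajProb (hpold : ∀ g s a, Differentiable ℝ fun θ' => pol θ' g s a) (g : G)
    (τ : Traj S A n) :
    HasDerivAt (fun θ' => trajProb n init trans pol θ' g τ)
      (∑ t, pathWeight init (scoreKernel n trans pol θ g t) τ) θ :=
  hasDerivAt_pathWeight init (fun θ' _ => policyKernel (pol θ' g) trans) _ θ τ
    fun _ => (hpold g _ _ θ).hasDerivAt.mul_const _

theorem trajProb_mul_importanceWeight (hpol : ∀ θ' g s a, 0 < pol θ' g s a) (g g' : G)
    (t' : Fin (n + 1)) (τ : Traj S A n) :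
    trajProb n init trans pol θ g' τ * importanceWeight n pol θ g g' t' τ =
      pathWeight init (fun k => policyKernel (pol θ (if k.castSucc < t' then g else g')) trans)
        τ := by
  rw [trajProb_eq_pathWeight, pathWeight, pathWeight, importanceWeight, mul_assoc,
    ← prod_mul_distrib]
  congr 1
  refine prod_congr rfl fun k _ => ?_
  have := (hpol θ g' (τ.1 k.castSucc) (τ.2 k)).ne'
  split_ifs <;> simp only [policyKernel] <;> field_simp

theorem pathWeight_mul_deriv_log (hpol : ∀ θ' g s a, 0 < pol θ' g s a)
    (hpold : ∀ g s a, Differentiable ℝ fun θ' => pol θ' g s a) (g : G)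
    (c : Fin n → S → A → S → ℝ) (t : Fin n) (hc : c t = policyKernel (pol θ g) trans)
    (τ : Traj S A n) :
    pathWeight init c τ * deriv (fun θ' => Real.log (pol θ' g (τ.1 t.castSucc) (τ.2 t))) θ =
      pathWeight init (Function.update c t
        (policyKernel (fun s a => deriv (fun θ' => pol θ' g s a) θ) trans)) τ := by
  have hpos := hpol θ g (τ.1 t.castSucc) (τ.2 t)
  rw [pathWeight_update, pathWeight, ← mul_prod_erase univ _ (mem_univ t), hc,
    ((hpold g _ _ θ).hasDerivAt.log hpos.ne').deriv]
  simp only [policyKernel]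
  field_simp

variable [Fintype S] [Fintype A]

theorem sum_sum_policyKernel (htrans1 : ∀ s a, ∑ s', trans s a s' = 1) (π : S → A → ℝ) (s : S) :
    ∑ a, ∑ s', policyKernel π trans s a s' = ∑ a, π s a := by
  simp [policyKernel, ← mul_sum, htrans1]

theorem sum_trajProb (hinit1 : ∑ s, init s = 1) (htrans1 : ∀ s a, ∑ s', trans s a s' = 1)
    (hpol1 : ∀ θ' g s, ∑ a, pol θ' g s a = 1) (g : G) :
    ∑ τ, trajProb n init trans pol θ g τ = 1 := by
  rw [trajProb_eq_pathWeight, sum_pathWeight init _ (fun _ => 1)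
    fun _ s => by rw [sum_sum_policyKernel htrans1, hpol1]]
  simp [hinit1]

theorem hasDerivAt_expReturn [Fintype G] (pG : G → ℝ) (r : S → G → ℝ)
    (hpold : ∀ g s a, Differentiable ℝ fun θ' => pol θ' g s a) :
    HasDerivAt (expReturn n init trans pol pG r)
      (∑ g, pG g * ∑ t, ∑ t', scoreReward n init trans pol r θ g t t') θ := by
  unfold expReturn
  refine HasDerivAt.fun_sum fun g _ => (HasDerivAt.const_mul (pG g) <| HasDerivAt.fun_sum
    fun τ _ => (hasDerivAt_trajProb hpold g τ).mul_const (∑ t', r (τ.1 t') g)).congr_deriv ?_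
  simp only [scoreReward, sum_mul_sum]
  rw [sum_comm]
  exact congrArg _ (sum_congr rfl fun t _ => sum_comm)

theorem scoreReward_eq_zero_of_le (htrans1 : ∀ s a, ∑ s', trans s a s' = 1)
    (hpold : ∀ g s a, Differentiable ℝ fun θ' => pol θ' g s a)
    (hpol1 : ∀ θ' g s, ∑ a, pol θ' g s a = 1) (r : S → G → ℝ) (g : G) {t : Fin n}
    {t' : Fin (n + 1)} (ht : t' ≤ t.castSucc) :
    scoreReward n init trans pol r θ g t t' = 0 := by
  have hμ : ∀ k : Fin n, (t' : ℕ) ≤ k → ∀ s,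
      ∑ a, ∑ s', scoreKernel n trans pol θ g t k s a s' = if k = t then 0 else 1 := by
    intro k _ s
    rcases eq_or_ne k t with rfl | hkt
    · simp only [scoreKernel, Function.update_self, sum_sum_policyKernel htrans1, if_true]
      exact sum_deriv_eq_zero_of_sum_eq univ _ 1 θ (fun a _ => (hpold g s a).differentiableAt)
        fun θ' => hpol1 θ' g s
    · simp only [scoreKernel, Function.update_of_ne hkt, sum_sum_policyKernel htrans1, hpol1,
        if_neg hkt]
  refine (sum_pathWeight_mul_apply (Nat.lt_succ_iff.mp t'.isLt) init _ _ hμ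
    fun s => r s g).trans ?_
  rw [prod_eq_zero (f := fun k : Fin n => if k = t then (0 : ℝ) else 1)
    (mem_filter.mpr ⟨mem_univ t, ht⟩) (if_pos rfl), zero_mul]

theorem sum_trajProb_importanceWeighted_eq_scoreReward (htrans1 : ∀ s a, ∑ s', trans s a s' = 1)
    (hpol : ∀ θ' g s a, 0 < pol θ' g s a)
    (hpold : ∀ g s a, Differentiable ℝ fun θ' => pol θ' g s a)
    (hpol1 : ∀ θ' g s, ∑ a, pol θ' g s a = 1) (r : S → G → ℝ) (g g' : G) {t : Fin n}
    {t' : Fin (n + 1)} (ht : t.castSucc < t') :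
    ∑ τ, trajProb n init trans pol θ g' τ *
        (deriv (fun θ'' => Real.log (pol θ'' g (τ.1 t.castSucc) (τ.2 t))) θ *
          (importanceWeight n pol θ g g' t' τ * r (τ.1 t') g)) =
      scoreReward n init trans pol r θ g t t' := by
  set mixed : Fin n → S → A → S → ℝ :=
    fun k => policyKernel (pol θ (if k.castSucc < t' then g else g')) trans
  have hterm : ∀ τ, trajProb n init trans pol θ g' τ *
      (deriv (fun θ'' => Real.log (pol θ'' g (τ.1 t.castSucc) (τ.2 t))) θ *
        (importanceWeight n pol θ g g' t' τ * r (τ.1 t') g)) =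
      pathWeight init (Function.update mixed t
        (policyKernel (fun s a => deriv (fun θ' => pol θ' g s a) θ) trans)) τ * r (τ.1 t') g := by
    intro τ
    rw [← pathWeight_mul_deriv_log hpol hpold g mixed t (by simp [mixed, ht]),
      ← trajProb_mul_importanceWeight hpol]
    ring
  rw [sum_congr rfl fun τ _ => hterm τ, scoreReward]
  refine sum_pathWeight_mul_apply_congr t' init _ (scoreKernel n trans pol θ g t) (fun _ => 1)
    (fun k hk => ?_) (fun k hk s => ?_) (fun k hk s => ?_) (fun s => r s g)
  · rcases eq_or_ne k t with rfl | hkt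
    · simp [scoreKernel]
    · simp [scoreKernel, mixed, Function.update_of_ne hkt, hk]
  · have hkt : k ≠ t := by rintro rfl; exact absurd ht (not_lt.mpr hk)
    simp [mixed, Function.update_of_ne hkt, not_lt.mpr hk, sum_sum_policyKernel htrans1, hpol1]
  · have hkt : k ≠ t := by rintro rfl; exact absurd ht (not_lt.mpr hk)
    simp [scoreKernel, Function.update_of_ne hkt, sum_sum_policyKernel htrans1, hpol1]

theorem sum_trajProb_mul_hindsightEstimate [Fintype G] (pG : G → ℝ) (r : S → G → ℝ)
    (htrans1 : ∀ s a, ∑ s', trans s a s' = 1) (hpol : ∀ θ' g s a, 0 < pol θ' g s a)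
    (hpold : ∀ g s a, Differentiable ℝ fun θ' => pol θ' g s a)
    (hpol1 : ∀ θ' g s, ∑ a, pol θ' g s a = 1) (g' : G) :
    ∑ τ, trajProb n init trans pol θ g' τ * hindsightEstimate n pol pG r θ τ g' =
      deriv (expReturn n init trans pol pG r) θ := by
  rw [(hasDerivAt_expReturn (n := n) (init := init) (trans := trans) pG r hpold).deriv]
  calc ∑ τ, trajProb n init trans pol θ g' τ * hindsightEstimate n pol pG r θ τ g'
      = ∑ g, pG g * ∑ t : Fin n, ∑ t' ∈ univ.filter (fun t' : Fin (n + 1) => t.castSucc < t'),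
          ∑ τ, trajProb n init trans pol θ g' τ *
            (deriv (fun θ'' => Real.log (pol θ'' g (τ.1 t.castSucc) (τ.2 t))) θ *
              (importanceWeight n pol θ g g' t' τ * r (τ.1 t') g)) := by
        simp only [hindsightEstimate, mul_sum]
        rw [sum_comm]
        refine sum_congr rfl fun g _ => ?_
        rw [sum_comm]
        refine sum_congr rfl fun t _ => ?_
        rw [sum_comm]
        exact sum_congr rfl fun t' _ => sum_congr rfl fun τ _ => by ring
    _ = ∑ g, pG g * ∑ t : Fin n, ∑ t' ∈ univ.filter (fun t' : Fin (n + 1) => t.castSucc < t'),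
          scoreReward n init trans pol r θ g t t' := by
        refine sum_congr rfl fun g _ => congrArg _ (sum_congr rfl fun t _ => sum_congr rfl
          fun t' ht' => ?_)
        exact sum_trajProb_importanceWeighted_eq_scoreReward htrans1 hpol hpold hpol1 r g g'
          (mem_filter.mp ht').2
    _ = ∑ g, pG g * ∑ t, ∑ t', scoreReward n init trans pol r θ g t t' := by
        refine sum_congr rfl fun g _ => congrArg _ (sum_congr rfl fun t _ => ?_)
        exact sum_filter_of_ne fun t' _ h => not_le.mp
          (mt (scoreReward_eq_zero_of_le htrans1 hpold hpol1 r g) h)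

end Hindsight

theorem per_decision_hindsight_estimator_unbiased_general {S A G : Type}
    [Fintype S] [Fintype A] [Fintype G]
    (n : ℕ) (init : S → ℝ) (trans : S → A → S → ℝ) (pol : ℝ → G → S → A → ℝ)
    (pG : G → ℝ) (r : S → G → ℝ)
    (hinit1 : ∑ s : S, init s = 1)
    (htrans1 : ∀ s a, ∑ s' : S, trans s a s' = 1)
    (hpol : ∀ (θ' : ℝ) (g : G) (s : S) (a : A), 0 < pol θ' g s a)
    (hpold : ∀ (g : G) (s : S) (a : A), Differentiable ℝ fun θ' => pol θ' g s a)
    (hpol1 : ∀ (θ' : ℝ) (g : G) (s : S), ∑ a : A, pol θ' g s a = 1)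
    (hpG1 : ∑ g : G, pG g = 1)
    (θ : ℝ) (N : ℕ) (hN : 0 < N) :
    (∑ D : Fin N → Traj S A n × G,
        (∏ i : Fin N, pG (D i).2 * trajProb n init trans pol θ (D i).2 (D i).1) *
          ((N : ℝ)⁻¹ * ∑ i : Fin N,
            ∑ g : G, pG g * ∑ t : Fin n,
              deriv (fun θ'' => Real.log (pol θ'' g ((D i).1.1 t.castSucc) ((D i).1.2 t))) θ *
                ∑ t' ∈ univ.filter (fun t' : Fin (n + 1) => t.castSucc < t'),
                  (∏ k : Fin n,
                      if k.castSucc < t' then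
                        pol θ g ((D i).1.1 k.castSucc) ((D i).1.2 k) /
                          pol θ (D i).2 ((D i).1.1 k.castSucc) ((D i).1.2 k)
                      else 1) *
                    r ((D i).1.1 t') g)) =
      deriv (expReturn n init trans pol pG r) θ := by
  have hq : ∑ x : Traj S A n × G, pG x.2 * trajProb n init trans pol θ x.2 x.1 = 1 := by
    rw [Fintype.sum_prod_type, sum_comm]
    simp only [← mul_sum, sum_trajProb hinit1 htrans1 hpol1, mul_one, hpG1]
  refine (sum_prod_mul_mean (fun x : Traj S A n × G => pG x.2 * trajProb n init trans pol θ x.2 x.1)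
    (fun x => hindsightEstimate n pol pG r θ x.1 x.2) hq hN).trans ?_
  calc _ = ∑ g', pG g' *
        ∑ τ, trajProb n init trans pol θ g' τ * hindsightEstimate n pol pG r θ τ g' := by
        rw [Fintype.sum_prod_type, sum_comm]
        simp only [mul_sum, mul_assoc]
    _ = deriv (expReturn n init trans pol pG r) θ := by
        simp only [sum_trajProb_mul_hindsightEstimate pG r htrans1 hpol hpold hpol1, ← sum_mul,
          hpG1, one_mul]

/-- unbiasedness of the per-decision hindsight policy gradient estimator.
Given `N` i.i.d. pairs `(τ⁽ⁱ⁾, g⁽ⁱ⁾)` with `g⁽ⁱ⁾ ∼ p(g)` and `τ⁽ⁱ⁾ ∼ p(τ ∣ g⁽ⁱ⁾, θ)`,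
the estimator `(1/N) ∑_i ∑_g p(g) ∑_{t=1}^{T-1} ∇ log p(a_t⁽ⁱ⁾ ∣ s_t⁽ⁱ⁾, g, θ)
∑_{t'=t+1}^T [∏_{k=1}^{t'-1} p(a_k⁽ⁱ⁾∣s_k⁽ⁱ⁾,g,θ)/p(a_k⁽ⁱ⁾∣s_k⁽ⁱ⁾,g⁽ⁱ⁾,θ)] r(s_{t'}⁽ⁱ⁾, g)`
has expectation `∇η(θ)`. -/
theorem per_decision_hindsight_estimator_unbiased {S A G : Type}
    [Fintype S] [Fintype A] [Fintype G]
    (n : ℕ) (init : S → ℝ) (trans : S → A → S → ℝ) (pol : ℝ → G → S → A → ℝ)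
    (pG : G → ℝ) (r : S → G → ℝ)
    (hinit : ∀ s, 0 < init s) (hinit1 : ∑ s : S, init s = 1)
    (htrans : ∀ s a s', 0 < trans s a s') (htrans1 : ∀ s a, ∑ s' : S, trans s a s' = 1)
    (hpol : ∀ (θ' : ℝ) (g : G) (s : S) (a : A), 0 < pol θ' g s a)
    (hpold : ∀ (g : G) (s : S) (a : A), Differentiable ℝ fun θ' => pol θ' g s a)
    (hpol1 : ∀ (θ' : ℝ) (g : G) (s : S), ∑ a : A, pol θ' g s a = 1)
    (hpG : ∀ g, 0 ≤ pG g) (hpG1 : ∑ g : G, pG g = 1)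
    (θ : ℝ) (N : ℕ) (hN : 0 < N) :
    (∑ D : Fin N → Traj S A n × G,
        (∏ i : Fin N, pG (D i).2 * trajProb n init trans pol θ (D i).2 (D i).1) *
          ((N : ℝ)⁻¹ * ∑ i : Fin N,
            ∑ g : G, pG g * ∑ t : Fin n,
              deriv (fun θ'' => Real.log (pol θ'' g ((D i).1.1 t.castSucc) ((D i).1.2 t))) θ *
                ∑ t' ∈ univ.filter (fun t' : Fin (n + 1) => t.castSucc < t'),
                  (∏ k : Fin n,
                      if k.castSucc < t' then
                        pol θ g ((D i).1.1 k.castSucc) ((D i).1.2 k) /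
                          pol θ (D i).2 ((D i).1.1 k.castSucc) ((D i).1.2 k)
                      else 1) *
                    r ((D i).1.1 t') g)) =
      deriv (expReturn n init trans pol pG r) θ :=
  per_decision_hindsight_estimator_unbiased_general n init trans pol pG r hinit1 htrans1 hpol hpold
    hpol1 hpG1 θ N hN
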